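/- For every n ≥ 2, the variance of the length function ℓ on A_n under the uniform distribution equals H_n - H_{n,2} - 1/4; that is, (1/|A_n|) · ∑_{v ∈ A_n} ℓ(v)² - ((1/|A_n|) · ∑_{v ∈ A_n} ℓ(v))² = H_n - H_{n,2} - 1/4 as rational numbers, where |A_n| = n!/2. -/

import Mathlib

/-!
For even `v`, `ℓ(v) = n - Φ(v)`, where `Φ(v) = numCyclesMarked v 0 1` is the number of cycles
of `v` (fixed points included), plus one if `0` and `1` lie in the same cycle. Left multiplication by a transposition
merges two cycles or splits one, and leaves `Φ` unchanged when the transposition is `(0 1)`; hence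
`Φ(t v) ≥ Φ(v) - 1` for each generator `t = (0 1)(i j)`, while an even `v ≠ 1` always admits a
generator `t` with `Φ(t⁻¹ v) = Φ(v) + 1`.

By the same invariance `Φ` has the same distribution on `A_n` as on `S_n`. Adding a letter to
`S_n` either adds a fixed point (raising `Φ` by one) or inserts the letter into one of `n`
positions of an existing cycle (leaving `Φ` unchanged), so `Φ` is distributed as
`2 + ∑_{i=3}^n Bernoulli(1/i)`, whose variance is `H_n - H_{n,2} - 1/4`.
-/

/-- The set `T(A_n) = {(1 2)(i j) : 1 ≤ i < j ≤ n}` of A-transpositions, viewed inside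
`Equiv.Perm (Fin n)` (letter `k` corresponds to `(k-1 : Fin n)`). -/
def ATrans (n : ℕ) : Set (Equiv.Perm (Fin n)) :=
  {v | ∃ (h1 : 1 < n) (i j : Fin n), i < j ∧
       v = Equiv.swap (⟨0, by omega⟩ : Fin n) ⟨1, h1⟩ * Equiv.swap i j}

/-- Length of a permutation with respect to the generating set `T(A_n)`. -/
noncomputable def alen (n : ℕ) (v : Equiv.Perm (Fin n)) : ℕ :=
  sInf {k | ∃ l : List (Equiv.Perm (Fin n)),
    (∀ x ∈ l, x ∈ ATrans n) ∧ l.length = k ∧ l.prod = v}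

open Equiv Finset

theorem Nat.card_eq_card_add_one_of_surjective {X Y : Type*} [Finite X] {f : X → Y}
    (hf : Function.Surjective f) {p q : X} (hpq : p ≠ q) (hfpq : f p = f q)
    (hinj : ∀ x y, x ≠ p → y ≠ p → f x = f y → x = y) :
    Nat.card X = Nat.card Y + 1 := by
  classical
  let g : {x // x ≠ p} → Y := fun x => f x
  have hg : Function.Bijective g := by
    refine ⟨fun x y hxy => Subtype.ext (hinj x y x.2 y.2 hxy), fun y => ?_⟩
    obtain ⟨x, rfl⟩ := hf y
    by_cases hx : x = p
    · exact ⟨⟨q, hpq.symm⟩, by simp [g, hx, hfpq]⟩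
    · exact ⟨⟨x, hx⟩, rfl⟩
  rw [← Nat.card_congr (Equiv.optionSubtypeNe p), Finite.card_option,
    Nat.card_eq_of_bijective g hg]

namespace Equiv.Perm

variable {α : Type*}

theorem SameCycle.induction_on [Finite α] {f : Perm α} {x y : α} (h : f.SameCycle x y)
    {P : α → Prop} (hx : P x) (hf : ∀ z, f.SameCycle x z → P z → P (f z)) : P y := by
  obtain ⟨i, rfl⟩ := h.exists_nat_pow_eq
  clear h
  induction i with
  | zero => exact hx
  | succ i ih =>
    rw [pow_succ', mul_apply]
    exact hf _ (sameCycle_pow_right.2 (SameCycle.refl _ _)) ih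

noncomputable def numCycles (v : Perm α) : ℕ := Nat.card (Quotient (SameCycle.setoid v))

section Swap

variable [Finite α] [DecidableEq α] {v : Perm α} {a b : α}

theorem sameCycle_swap_mul_of_not_sameCycle (h : ¬ v.SameCycle a b) :
    (swap a b * v).SameCycle a b := by
  set w := swap a b * v
  -- Walking backwards along the `v`-cycle of `a`, `w` agrees with `v` up to `v⁻¹ a ↦ b`.
  have hb : w.SameCycle (v⁻¹ a) b := ⟨1, by simp [w]⟩
  refine SameCycle.induction_on (f := v⁻¹) (P := fun z => w.SameCycle z b)
    (sameCycle_apply_left.2 (SameCycle.refl _ _)) hb fun z hz hzb => ?_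
  by_cases hza : z = a
  · exact hza ▸ hb
  have hzb' : z ≠ b := by
    rintro rfl
    exact h (sameCycle_inv.1 (sameCycle_apply_left.1 hz))
  exact SameCycle.trans ⟨1, by simp [w, swap_apply_of_ne_of_ne hza hzb']⟩ hzb

theorem sameCycle_swap_mul_iff (h : ¬ v.SameCycle a b) {x y : α} :
    (swap a b * v).SameCycle x y ↔ v.SameCycle x y ∨
      (v.SameCycle x a ∨ v.SameCycle x b) ∧ (v.SameCycle y a ∨ v.SameCycle y b) := by
  set w := swap a b * v
  have hab : w.SameCycle a b := sameCycle_swap_mul_of_not_sameCycle h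
  constructor
  · refine fun hxy => SameCycle.induction_on hxy (P := fun y => v.SameCycle x y ∨
      (v.SameCycle x a ∨ v.SameCycle x b) ∧ (v.SameCycle y a ∨ v.SameCycle y b))
      (Or.inl (SameCycle.refl _ _)) fun z _ hz => ?_
    rw [show w z = swap a b (v z) from rfl]
    replace hz : v.SameCycle x (v z) ∨ (v.SameCycle x a ∨ v.SameCycle x b) ∧
        (v.SameCycle (v z) a ∨ v.SameCycle (v z) b) := by
      simpa only [sameCycle_apply_left, sameCycle_apply_right] using hz
    rcases eq_or_ne (v z) a with hza | hza
    · rw [hza, swap_apply_left]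
      rw [hza] at hz
      exact Or.inr ⟨hz.elim Or.inl And.left, Or.inr (SameCycle.refl _ _)⟩
    rcases eq_or_ne (v z) b with hzb | hzb
    · rw [hzb, swap_apply_right]
      rw [hzb] at hz
      exact Or.inr ⟨hz.elim Or.inr And.left, Or.inl (SameCycle.refl _ _)⟩
    rwa [swap_apply_of_ne_of_ne hza hzb]
  · have hstep : ∀ z, w.SameCycle z (v z) := fun z => by
      refine SameCycle.trans ⟨1, rfl⟩ ?_
      show w.SameCycle (swap a b (v z)) (v z)
      rw [swap_apply_def]
      split_ifs with h1 h2
      · exact h1 ▸ hab.symm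
      · exact h2 ▸ hab
      · exact SameCycle.refl _ _
    have hsub : ∀ {p q}, v.SameCycle p q → w.SameCycle p q := fun hpq =>
      SameCycle.induction_on hpq (SameCycle.refl _ _) fun z _ hz => hz.trans (hstep z)
    have hmerged : ∀ {p}, v.SameCycle p a ∨ v.SameCycle p b → w.SameCycle p a :=
      fun hp => hp.elim hsub fun hpb => (hsub hpb).trans hab.symm
    rintro (hxy | ⟨hx, hy⟩)
    · exact hsub hxy
    · exact (hmerged hx).trans (hmerged hy).symm

theorem numCycles_swap_mul_add_one (h : ¬ v.SameCycle a b) :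
    numCycles (swap a b * v) + 1 = numCycles v := by
  let f : Quotient (SameCycle.setoid v) → Quotient (SameCycle.setoid (swap a b * v)) :=
    Quotient.map' id fun _ _ hxy => (sameCycle_swap_mul_iff h).2 (Or.inl hxy)
  refine (Nat.card_eq_card_add_one_of_surjective (f := f) (p := ⟦a⟧) (q := ⟦b⟧)
    (Quotient.ind fun x => ⟨⟦x⟧, rfl⟩) (fun hq => h (Quotient.exact hq))
    (Quotient.sound (sameCycle_swap_mul_of_not_sameCycle h)) ?_).symm
  refine Quotient.ind fun x => Quotient.ind fun y hx hy hxy => Quotient.sound ?_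
  replace hx : ¬ v.SameCycle x a := fun hxa => hx (Quotient.sound hxa)
  replace hy : ¬ v.SameCycle y a := fun hya => hy (Quotient.sound hya)
  rcases (sameCycle_swap_mul_iff h).1 (Quotient.exact hxy) with hxy | ⟨hxb, hyb⟩
  · exact hxy
  · exact ((hxb.resolve_left hx).trans (hyb.resolve_left hy).symm)

theorem not_sameCycle_swap_mul (hab : a ≠ b) (h : v.SameCycle a b) :
    ¬ (swap a b * v).SameCycle a b := by
  have hex : ∃ j, (v ^ j) a = b := h.exists_nat_pow_eq
  set j := Nat.find hex
  have hj : (v ^ j) a = b := Nat.find_spec hex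
  have hj0 : 0 < j := Nat.pos_of_ne_zero fun h0 => hab (by simpa [h0] using hj)
  have hne : ∀ t, 0 < t → t < j → (v ^ t) a ≠ a ∧ (v ^ t) a ≠ b := fun t ht htj =>
    ⟨fun hta => Nat.find_min hex (show j - t < j by omega) (by
      rw [← hj, ← Nat.sub_add_cancel htj.le, pow_add, mul_apply, hta,
        Nat.sub_add_cancel htj.le]),
     Nat.find_min hex htj⟩
  -- `j` is the first time `v ^ j` sends `a` to `b`; `swap a b * v` maps `{(v ^ t) a | t < j}`
  -- into itself, and this set misses `b`.
  intro hw
  obtain ⟨t, htj, hta⟩ : ∃ t < j, (v ^ t) a = b := by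
    refine SameCycle.induction_on hw (P := fun z => ∃ t < j, (v ^ t) a = z) ⟨0, hj0, rfl⟩ ?_
    rintro _ - ⟨t, htj, rfl⟩
    rcases lt_or_eq_of_le (show t + 1 ≤ j from htj) with ht | ht
    · refine ⟨t + 1, ht, ?_⟩
      rw [mul_apply, ← mul_apply v, ← pow_succ', swap_apply_of_ne_of_ne
        (hne _ t.succ_pos ht).1 (hne _ t.succ_pos ht).2]
    · refine ⟨0, hj0, ?_⟩
      rw [mul_apply, ← mul_apply v, ← pow_succ', ht, hj, swap_apply_right, pow_zero, one_apply]
  rcases Nat.eq_zero_or_pos t with rfl | ht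
  · exact hab (by simpa using hta)
  · exact (hne t ht htj).2 hta

theorem numCycles_swap_mul_of_sameCycle (hab : a ≠ b) (h : v.SameCycle a b) :
    numCycles (swap a b * v) = numCycles v + 1 := by
  have := numCycles_swap_mul_add_one (not_sameCycle_swap_mul hab h)
  rwa [swap_mul_self_mul, eq_comm] at this

end Swap

theorem numCycles_one [Finite α] : numCycles (1 : Perm α) = Nat.card α :=
  (Nat.card_eq_of_bijective _
    ⟨fun _ _ hxy => sameCycle_one.1 (Quotient.exact hxy), Quotient.mk_surjective⟩).symm

theorem numCycles_le_card [Finite α] (v : Perm α) : numCycles v ≤ Nat.card α :=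
  Nat.card_le_card_of_surjective _ Quotient.mk_surjective

section Congr

variable {β : Type*}

theorem sameCycle_permCongr (e : α ≃ β) (v : Perm α) (x y : α) :
    (e.permCongr v).SameCycle (e x) (e y) ↔ v.SameCycle x y := by
  have hpow (i : ℤ) : (e.permCongr v) ^ i = e.permCongr (v ^ i) :=
    (map_zpow e.permCongrHom v i).symm
  simp only [SameCycle, hpow, permCongr_apply, symm_apply_apply, e.apply_eq_iff_eq]

theorem numCycles_permCongr (e : α ≃ β) (v : Perm α) :
    numCycles (e.permCongr v) = numCycles v :=
  (Nat.card_congr (Quotient.congr e fun x y => (sameCycle_permCongr e v x y).symm)).symm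

theorem sameCycle_optionCongr [Finite α] (σ : Perm α) (x y : α) :
    SameCycle (optionCongr σ) (some x) (some y) ↔ σ.SameCycle x y := by
  constructor
  · intro h
    obtain ⟨y', hy', hxy'⟩ := SameCycle.induction_on h
      (P := fun z => ∃ y', some y' = z ∧ σ.SameCycle x y') ⟨x, rfl, SameCycle.refl _ _⟩
      fun _ _ ⟨z, hz, hxz⟩ => ⟨σ z, by simp [← hz], hxz.trans ⟨1, rfl⟩⟩
    exact Option.some_injective _ hy' ▸ hxy'
  · exact fun h => SameCycle.induction_on h
      (P := fun z => SameCycle (optionCongr σ) (some x) (some z))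
      (SameCycle.refl _ _) fun z _ hz => hz.trans ⟨1, by simp⟩

theorem numCycles_optionCongr [Finite α] (σ : Perm α) :
    numCycles (optionCongr σ) = numCycles σ + 1 := by
  have hnone (x : α) : ¬ SameCycle (optionCongr σ) (some x) none := fun h =>
    Option.some_ne_none x (h.eq_of_right (by simp [Function.IsFixedPt]))
  let f :
      Option (Quotient (SameCycle.setoid σ)) → Quotient (SameCycle.setoid (optionCongr σ)) :=
    fun q => q.elim ⟦none⟧ (Quotient.map' some fun x y => (sameCycle_optionCongr σ x y).2)
  have hf : Function.Bijective f := by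
    refine ⟨?_, Quotient.ind fun z => ?_⟩
    · rintro (_ | ⟨⟨x⟩⟩) (_ | ⟨⟨y⟩⟩) hxy
      · rfl
      · exact (hnone y (Quotient.exact hxy).symm).elim
      · exact (hnone x (Quotient.exact hxy)).elim
      · exact congrArg some
          (Quotient.sound ((sameCycle_optionCongr σ x y).1 (Quotient.exact hxy)))
    · cases z with
      | none => exact ⟨none, rfl⟩
      | some x => exact ⟨some ⟦x⟧, rfl⟩
  rw [numCycles, ← Nat.card_eq_of_bijective f hf, Finite.card_option, numCycles]

end Congr

open scoped Classical in
noncomputable def numCyclesMarked (v : Perm α) (x y : α) : ℕ :=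
  numCycles v + if v.SameCycle x y then 1 else 0

section Marked

variable {v : Perm α} {a b x y : α}

theorem numCyclesMarked_of_sameCycle (h : v.SameCycle x y) :
    numCyclesMarked v x y = numCycles v + 1 := by
  simp [numCyclesMarked, h]

theorem numCyclesMarked_of_not_sameCycle (h : ¬ v.SameCycle x y) :
    numCyclesMarked v x y = numCycles v := by
  simp [numCyclesMarked, h]

theorem numCyclesMarked_one [Finite α] (hxy : x ≠ y) :
    numCyclesMarked (1 : Perm α) x y = Nat.card α := by
  rw [numCyclesMarked_of_not_sameCycle (by simpa using hxy), numCycles_one]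

theorem numCyclesMarked_permCongr {β : Type*} (e : α ≃ β) (v : Perm α) (x y : α) :
    numCyclesMarked (e.permCongr v) (e x) (e y) = numCyclesMarked v x y := by
  by_cases h : v.SameCycle x y
  · rw [numCyclesMarked_of_sameCycle h, numCyclesMarked_of_sameCycle
      ((sameCycle_permCongr e v x y).2 h), numCycles_permCongr]
  · rw [numCyclesMarked_of_not_sameCycle h, numCyclesMarked_of_not_sameCycle
      (mt (sameCycle_permCongr e v x y).1 h), numCycles_permCongr]

theorem numCyclesMarked_optionCongr [Finite α] (σ : Perm α) (x y : α) :
    numCyclesMarked (optionCongr σ) (some x) (some y) = numCyclesMarked σ x y + 1 := by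
  by_cases h : σ.SameCycle x y
  · rw [numCyclesMarked_of_sameCycle h, numCyclesMarked_of_sameCycle
      ((sameCycle_optionCongr σ x y).2 h), numCycles_optionCongr]
  · rw [numCyclesMarked_of_not_sameCycle h, numCyclesMarked_of_not_sameCycle
      (mt (sameCycle_optionCongr σ x y).1 h), numCycles_optionCongr]

variable [Finite α] [DecidableEq α]

theorem numCyclesMarked_swap_mul_self (hxy : x ≠ y) (v : Perm α) :
    numCyclesMarked (swap x y * v) x y = numCyclesMarked v x y := by
  by_cases h : v.SameCycle x y
  · rw [numCyclesMarked_of_sameCycle h, numCyclesMarked_of_not_sameCycle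
      (not_sameCycle_swap_mul hxy h), numCycles_swap_mul_of_sameCycle hxy h]
  · rw [numCyclesMarked_of_not_sameCycle h, numCyclesMarked_of_sameCycle
      (sameCycle_swap_mul_of_not_sameCycle h), numCycles_swap_mul_add_one h]

theorem numCyclesMarked_le_swap_mul_add_one (v : Perm α) (a b x y : α) :
    numCyclesMarked v x y ≤ numCyclesMarked (swap a b * v) x y + 1 := by
  rcases eq_or_ne a b with rfl | hab
  · rw [swap_self]
    exact Nat.le_succ _
  by_cases h : v.SameCycle a b
  · have := numCycles_swap_mul_of_sameCycle hab h
    unfold numCyclesMarked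
    split_ifs <;> omega
  · have := numCycles_swap_mul_add_one h
    by_cases hxy : v.SameCycle x y
    · rw [numCyclesMarked_of_sameCycle hxy,
        numCyclesMarked_of_sameCycle ((sameCycle_swap_mul_iff h).2 (Or.inl hxy))]
      omega
    · unfold numCyclesMarked
      split_ifs <;> omega

theorem numCyclesMarked_le_card (hxy : x ≠ y) (v : Perm α) :
    numCyclesMarked v x y ≤ Nat.card α := by
  by_cases h : v.SameCycle x y
  · rw [numCyclesMarked_of_sameCycle h, ← numCycles_swap_mul_of_sameCycle hxy h]
    exact numCycles_le_card _
  · rw [numCyclesMarked_of_not_sameCycle h]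
    exact numCycles_le_card v

theorem numCyclesMarked_swap_mul_add_one (h : ¬ v.SameCycle a b) (hx : ¬ v.SameCycle x a)
    (hy : ¬ v.SameCycle y a) :
    numCyclesMarked (swap a b * v) x y + 1 = numCyclesMarked v x y := by
  have hiff : (swap a b * v).SameCycle x y ↔ v.SameCycle x y := by
    rw [sameCycle_swap_mul_iff h]
    refine ⟨fun hxy => hxy.elim id fun ⟨hxb, hyb⟩ => ?_, Or.inl⟩
    exact (hxb.resolve_left hx).trans (hyb.resolve_left hy).symm
  have := numCycles_swap_mul_add_one h
  by_cases hxy : v.SameCycle x y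
  · rw [numCyclesMarked_of_sameCycle hxy, numCyclesMarked_of_sameCycle (hiff.2 hxy)]
    omega
  · rw [numCyclesMarked_of_not_sameCycle hxy, numCyclesMarked_of_not_sameCycle (mt hiff.1 hxy)]
    omega

theorem numCyclesMarked_swap_apply_mul (ha : v a ≠ a) (hax : a ≠ x) (hay : a ≠ y) :
    numCyclesMarked (swap a (v a) * v) x y = numCyclesMarked v x y + 1 := by
  set w := swap a (v a) * v
  have hfix : Function.IsFixedPt w a := by simp [w, Function.IsFixedPt]
  have := numCyclesMarked_swap_mul_add_one (a := a) (b := v a) (x := x) (y := y)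
    (fun h => ha (h.eq_of_left hfix).symm) (fun h => hax (h.eq_of_right hfix).symm)
    (fun h => hay (h.eq_of_right hfix).symm)
  rwa [swap_mul_self_mul, eq_comm] at this

theorem numCyclesMarked_swap_none_mul_optionCongr (σ : Perm α) (q x y : α) :
    numCyclesMarked (swap none (some q) * optionCongr σ) (some x) (some y) =
      numCyclesMarked σ x y := by
  have hnone (z : Option α) (hz : z ≠ none) : ¬ SameCycle (optionCongr σ) z none :=
    fun h => hz (h.eq_of_right (by simp [Function.IsFixedPt]))
  have := numCyclesMarked_swap_mul_add_one (fun h => hnone _ (Option.some_ne_none q) h.symm)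
    (hnone _ (Option.some_ne_none x)) (hnone _ (Option.some_ne_none y))
  rw [numCyclesMarked_optionCongr] at this
  omega

end Marked

section Sums

variable {M : Type*} [AddCommMonoid M]

theorem sum_perm_option [Fintype α] [DecidableEq α] (f : ℕ → M) (x y : α) :
    ∑ w : Perm (Option α), f (numCyclesMarked w (some x) (some y)) =
      ∑ σ : Perm α,
        (f (numCyclesMarked σ x y + 1) + Fintype.card α • f (numCyclesMarked σ x y)) := by
  rw [← decomposeOption.symm.sum_comp, Fintype.sum_prod_type, Fintype.sum_option,
    Finset.sum_add_distrib]
  simp only [decomposeOption_symm_apply, swap_self, ← one_def, one_mul,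
    numCyclesMarked_optionCongr, numCyclesMarked_swap_none_mul_optionCongr]
  rw [Finset.sum_comm]
  simp

theorem sum_perm_fin_succ (f : ℕ → M) (n : ℕ) :
    ∑ v : Perm (Fin (n + 3)), f (numCyclesMarked v 0 1) =
      ∑ σ : Perm (Fin (n + 2)),
        (f (numCyclesMarked σ 0 1 + 1) + (n + 2) • f (numCyclesMarked σ 0 1)) := by
  have h0 : finSuccEquivLast (0 : Fin (n + 3)) = some 0 := finSuccEquivLast_castSucc 0
  have h1 : finSuccEquivLast (1 : Fin (n + 3)) = some 1 := finSuccEquivLast_castSucc 1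
  have := sum_perm_option f (0 : Fin (n + 2)) 1
  rw [Fintype.card_fin] at this
  rw [← this, ← finSuccEquivLast.permCongr.sum_comp]
  simp only [← h0, ← h1, numCyclesMarked_permCongr]

theorem sum_perm_fin_two (f : ℕ → M) :
    ∑ v : Perm (Fin 2), f (numCyclesMarked v 0 1) = 2 • f 2 := by
  have hΦ (v : Perm (Fin 2)) : numCyclesMarked v 0 1 = 2 := by
    have h01 : (0 : Fin 2) ≠ 1 := by decide
    obtain rfl | rfl : v = 1 ∨ v = swap 0 1 := by revert v; decide
    · simpa using numCyclesMarked_one h01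
    · simpa using (numCyclesMarked_swap_mul_self h01 1).trans (numCyclesMarked_one h01)
  simp [hΦ, Fintype.card_perm]

end Sums

theorem sum_numCyclesMarked_fin (n : ℕ) :
    ∑ v : Perm (Fin (n + 2)), (numCyclesMarked v 0 1 : ℚ) =
      (n + 2).factorial * (∑ i ∈ Icc 1 (n + 2), (1 : ℚ) / i + 1 / 2) := by
  induction n with
  | zero =>
    rw [sum_perm_fin_two (fun k => (k : ℚ))]
    simp [sum_Icc_succ_top]
    norm_num
  | succ n ih =>
    rw [sum_perm_fin_succ (fun k => (k : ℚ))]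
    simp only [Nat.cast_add, Nat.cast_one, nsmul_eq_mul, sum_add_distrib, ← mul_sum, ih,
      sum_const, card_univ, Fintype.card_perm, Fintype.card_fin]
    rw [show n + 1 + 2 = n + 2 + 1 from rfl, sum_Icc_succ_top (b := n + 2) (by omega),
      Nat.factorial_succ (n + 2)]
    push_cast
    field_simp
    ring

theorem sum_numCyclesMarked_sq_fin (n : ℕ) :
    ∑ v : Perm (Fin (n + 2)), (numCyclesMarked v 0 1 : ℚ) ^ 2 =
      (n + 2).factorial * ((∑ i ∈ Icc 1 (n + 2), (1 : ℚ) / i) -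
        (∑ i ∈ Icc 1 (n + 2), (1 : ℚ) / i ^ 2) - 1 / 4 +
          (∑ i ∈ Icc 1 (n + 2), (1 : ℚ) / i + 1 / 2) ^ 2) := by
  induction n with
  | zero =>
    rw [sum_perm_fin_two (fun k => (k : ℚ) ^ 2)]
    simp [sum_Icc_succ_top]
    norm_num
  | succ n ih =>
    rw [sum_perm_fin_succ (fun k => (k : ℚ) ^ 2)]
    simp only [Nat.cast_add, Nat.cast_one, nsmul_eq_mul, add_sq, sum_add_distrib, ← mul_sum, ih,
      ← sum_mul, sum_numCyclesMarked_fin, sum_const, card_univ, Fintype.card_perm,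
      Fintype.card_fin]
    rw [show n + 1 + 2 = n + 2 + 1 from rfl, sum_Icc_succ_top (b := n + 2) (by omega),
      sum_Icc_succ_top (b := n + 2) (by omega), Nat.factorial_succ (n + 2)]
    generalize ∑ i ∈ Icc 1 (n + 2), (1 : ℚ) / i = H
    generalize ∑ i ∈ Icc 1 (n + 2), (1 : ℚ) / i ^ 2 = H₂
    push_cast
    field_simp
    ring

-- As in `stmt_15`, the subtype carries the classical `Fintype` instance.
open scoped Classical in
theorem sum_alternatingGroup [Fintype α] [DecidableEq α] {M : Type*} [AddCommMonoid M] {x y : α}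
    (hxy : x ≠ y) {f : Perm α → M} (hf : ∀ v, f (swap x y * v) = f v) :
    2 • ∑ v : {v : Perm α // v ∈ alternatingGroup α}, f v = ∑ v, f v := by
  have hodd : ∑ v : {v : Perm α // v ∉ alternatingGroup α}, f v =
      ∑ v : {v : Perm α // v ∈ alternatingGroup α}, f v := by
    refine (Fintype.sum_equiv ((Equiv.mulLeft (swap x y)).subtypeEquiv fun v => ?_) _ _
      fun v => (hf v).symm).symm
    rcases Int.units_eq_one_or (sign v) with h | h <;> simp [h, sign_swap hxy]
  rw [← Fintype.sum_subtype_add_sum_subtype (· ∈ alternatingGroup α) f, hodd, two_nsmul]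
  convert rfl

theorem exists_apply_ne_of_sign_eq_one [Fintype α] [DecidableEq α] {v : Perm α}
    (hv : sign v = 1) (h1 : v ≠ 1) (x y : α) : ∃ a, v a ≠ a ∧ a ≠ x ∧ a ≠ y := by
  by_contra! h
  have hsupp : v.support ⊆ {x, y} := fun a ha => by
    by_cases hax : a = x
    · simp [hax]
    · simp [h a (mem_support.1 ha) hax]
  have hcard : v.support.card = 2 :=
    le_antisymm ((card_le_card hsupp).trans card_le_two) (two_le_card_support_of_ne_one h1)
  simp [(card_support_eq_two.1 hcard).sign_eq] at hv

end Equiv.Perm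

open Equiv.Perm

theorem mem_ATrans_iff {n : ℕ} {t : Perm (Fin (n + 2))} :
    t ∈ ATrans (n + 2) ↔ ∃ i j : Fin (n + 2), i ≠ j ∧ t = swap 0 1 * swap i j := by
  constructor
  · rintro ⟨-, i, j, hij, rfl⟩
    exact ⟨i, j, hij.ne, rfl⟩
  · rintro ⟨i, j, hij, rfl⟩
    rcases hij.lt_or_gt with h | h
    · exact ⟨by omega, i, j, h, rfl⟩
    · exact ⟨by omega, j, i, h, by rw [swap_comm i j]; rfl⟩

theorem le_numCyclesMarked_prod_add_length {n : ℕ} (l : List (Perm (Fin (n + 2))))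
    (hl : ∀ t ∈ l, t ∈ ATrans (n + 2)) : n + 2 ≤ numCyclesMarked l.prod 0 1 + l.length := by
  induction l with
  | nil => simp [numCyclesMarked_one zero_ne_one]
  | cons t l ih =>
    obtain ⟨i, j, -, rfl⟩ := mem_ATrans_iff.1 (hl t List.mem_cons_self)
    have := numCyclesMarked_le_swap_mul_add_one l.prod i j 0 1
    rw [List.prod_cons, List.length_cons, mul_assoc, numCyclesMarked_swap_mul_self zero_ne_one]
    have := ih fun t ht => hl t (List.mem_cons_of_mem _ ht)
    omega

theorem exists_mem_ATrans_numCyclesMarked_inv_mul {n : ℕ} {v : Perm (Fin (n + 2))}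
    (hv : sign v = 1) (h1 : v ≠ 1) : ∃ t ∈ ATrans (n + 2), sign (t⁻¹ * v) = 1 ∧
      numCyclesMarked (t⁻¹ * v) 0 1 = numCyclesMarked v 0 1 + 1 := by
  obtain ⟨a, hva, ha0, ha1⟩ := exists_apply_ne_of_sign_eq_one hv h1 0 1
  set v' := swap 0 1 * v
  have hv'a : v' a ≠ a := fun h =>
    hva ((swap_apply_eq_iff.1 h).trans (swap_apply_of_ne_of_ne ha0 ha1))
  refine ⟨swap 0 1 * swap a (v' a), mem_ATrans_iff.2 ⟨a, _, hv'a.symm, rfl⟩, ?_, ?_⟩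
  · rw [Perm.sign_mul, sign_inv, Perm.sign_mul, sign_swap zero_ne_one, sign_swap hv'a.symm, hv]
    rfl
  · rw [mul_inv_rev, swap_inv, swap_inv, mul_assoc, numCyclesMarked_swap_apply_mul hv'a ha0 ha1,
      numCyclesMarked_swap_mul_self zero_ne_one]

theorem exists_prod_eq_of_sign_eq_one {n : ℕ} {v : Perm (Fin (n + 2))} (hv : sign v = 1) :
    ∃ l : List (Perm (Fin (n + 2))), (∀ t ∈ l, t ∈ ATrans (n + 2)) ∧ l.prod = v ∧
      l.length + numCyclesMarked v 0 1 = n + 2 := by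
  induction h : n + 2 - numCyclesMarked v 0 1 using Nat.strong_induction_on generalizing v with
  | _ k ih =>
    obtain rfl | h1 := eq_or_ne v 1
    · exact ⟨[], by simp, rfl, by simp [numCyclesMarked_one zero_ne_one]⟩
    obtain ⟨t, ht, hu, hΦ⟩ := exists_mem_ATrans_numCyclesMarked_inv_mul hv h1
    have hle := numCyclesMarked_le_card (zero_ne_one (α := Fin (n + 2))) (t⁻¹ * v)
    rw [Nat.card_fin] at hle
    obtain ⟨l, hl, hprod, hlen⟩ := ih _ (by omega) hu rfl
    refine ⟨t :: l, ?_, by rw [List.prod_cons, hprod, mul_inv_cancel_left], ?_⟩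
    · exact fun s hs => (List.mem_cons.1 hs).elim (· ▸ ht) (hl s)
    · rw [List.length_cons]
      omega

theorem alen_add_numCyclesMarked {n : ℕ} {v : Perm (Fin (n + 2))} (hv : sign v = 1) :
    alen (n + 2) v + numCyclesMarked v 0 1 = n + 2 := by
  obtain ⟨l, hl, hprod, hlen⟩ := exists_prod_eq_of_sign_eq_one hv
  have hleast : IsLeast {k | ∃ l : List (Perm (Fin (n + 2))),
      (∀ x ∈ l, x ∈ ATrans (n + 2)) ∧ l.length = k ∧ l.prod = v} l.length := by
    refine ⟨⟨l, hl, rfl, hprod⟩, ?_⟩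
    rintro _ ⟨l', hl', rfl, rfl⟩
    have := le_numCyclesMarked_prod_add_length l' hl'
    omega
  rw [alen, hleast.csInf_eq, hlen]

open scoped Classical in
/-- For `n ≥ 2`, the variance of `ℓ` on `A_n` under the uniform distribution is
`H_n - H_{n,2} - 1/4`, where `|A_n| = n!/2`. -/
theorem stmt_15 (n : ℕ) (hn : 2 ≤ n) :
    (1 / ((n.factorial : ℚ) / 2)) *
        (∑ v : {v : Equiv.Perm (Fin n) // v ∈ alternatingGroup (Fin n)},
          (alen n (v : Equiv.Perm (Fin n)) : ℚ) ^ 2)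
      - ((1 / ((n.factorial : ℚ) / 2)) *
        ∑ v : {v : Equiv.Perm (Fin n) // v ∈ alternatingGroup (Fin n)},
          (alen n (v : Equiv.Perm (Fin n)) : ℚ)) ^ 2
      = (∑ i ∈ Finset.Icc 1 n, (1 : ℚ) / i)
        - (∑ i ∈ Finset.Icc 1 n, (1 : ℚ) / (i ^ 2)) - 1 / 4 := by
  obtain ⟨n, rfl⟩ : ∃ m, n = m + 2 := ⟨n - 2, by omega⟩
  have hsum (g : ℚ → ℚ) :
      ∑ v : {v : Perm (Fin (n + 2)) // v ∈ alternatingGroup (Fin (n + 2))}, g (alen (n + 2) v) =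
        (∑ v : Perm (Fin (n + 2)), g ((n + 2 : ℕ) - numCyclesMarked v 0 1)) / 2 := by
    rw [eq_div_iff two_ne_zero, mul_comm, ← sum_alternatingGroup zero_ne_one
      fun v => by rw [numCyclesMarked_swap_mul_self zero_ne_one], nsmul_eq_mul, Nat.cast_ofNat]
    congr 2 with v
    congr 1
    rw [eq_sub_iff_add_eq]
    exact_mod_cast alen_add_numCyclesMarked (mem_alternatingGroup.1 v.2)
  have hsq := hsum (· ^ 2)
  have hid := hsum id
  simp only [id] at hsq hid
  rw [hsq, hid]
  simp only [sub_sq, sum_add_distrib, sum_sub_distrib, ← mul_sum, sum_const, card_univ,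
    Fintype.card_perm, Fintype.card_fin, nsmul_eq_mul, sum_numCyclesMarked_fin,
    sum_numCyclesMarked_sq_fin]
  generalize ∑ i ∈ Icc 1 (n + 2), (1 : ℚ) / i = H
  generalize ∑ i ∈ Icc 1 (n + 2), (1 : ℚ) / i ^ 2 = H₂
  have : ((n + 2).factorial : ℚ) ≠ 0 := by positivity
  field_simp
  ring
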